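/- Let L be a Lie algebra over a commutative ring R and let N : L → L be a linear endomorphism whose Nijenhuis torsion vanishes identically, i.e. ⁅N x, N y⁆ − N ⁅N x, y⁆ − N ⁅x, N y⁆ + N (N ⁅x, y⁆) = 0 for all x, y ∈ L. Define the deformed bracket ⁅x, y⁆_N := ⁅N x, y⁆ + ⁅x, N y⁆ − N ⁅x, y⁆. Then ⁅·,·⁆_N is again a Lie bracket on L: it is bilinear, alternating (⁅x, x⁆_N = 0), and satisfies the Jacobi identity ⁅x, ⁅y, z⁆_N⁆_N + ⁅y, ⁅z, x⁆_N⁆_N + ⁅z, ⁅x, y⁆_N⁆_N = 0 for all x, y, z ∈ L. -/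
import Mathlib


/-- If `N` is a Nijenhuis operator on a Lie algebra `L` (its Nijenhuis torsion
vanishes identically), then the deformed bracket
`⁅x, y⁆_N = ⁅N x, y⁆ + ⁅x, N y⁆ − N ⁅x, y⁆` is again a Lie bracket on `L`:
it is bilinear, alternating, and satisfies the Jacobi identity. -/
theorem deformed_bracket_isLieBracket
    {R L : Type*} [CommRing R] [LieRing L] [LieAlgebra R L]
    (N : L →ₗ[R] L)
    (hN : ∀ x y : L, ⁅N x, N y⁆ - N ⁅N x, y⁆ - N ⁅x, N y⁆ + N (N ⁅x, y⁆) = 0) :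
    let bN : L → L → L := fun x y => ⁅N x, y⁆ + ⁅x, N y⁆ - N ⁅x, y⁆
    (∀ x x' y : L, bN (x + x') y = bN x y + bN x' y) ∧
    (∀ x y y' : L, bN x (y + y') = bN x y + bN x y') ∧
    (∀ (t : R) (x y : L), bN (t • x) y = t • bN x y) ∧
    (∀ (t : R) (x y : L), bN x (t • y) = t • bN x y) ∧
    (∀ x : L, bN x x = 0) ∧
    (∀ x y z : L, bN x (bN y z) + bN y (bN z x) + bN z (bN x y) = 0) := by
  intro bN
  have hNN : ∀ x y : L, ⁅N x, N y⁆ = N ⁅N x, y⁆ + N ⁅x, N y⁆ - N (N ⁅x, y⁆) := by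
    intro x y
    have h := hN x y
    have h2 : ⁅N x, N y⁆ - (N ⁅N x, y⁆ + N ⁅x, N y⁆ - N (N ⁅x, y⁆)) = 0 := by
      rw [← h]; abel
    exact sub_eq_zero.mp h2
  have key : ∀ x y z : L, bN x (bN y z) =
      ⁅N x, ⁅N y, z⁆⁆ + ⁅N x, ⁅y, N z⁆⁆ + ⁅x, ⁅N y, N z⁆⁆
      - (N ⁅N x, ⁅y, z⁆⁆ + N ⁅x, ⁅N y, z⁆⁆ + N ⁅x, ⁅y, N z⁆⁆)
      + N (N ⁅x, ⁅y, z⁆⁆) := by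
    intro x y z
    simp only [bN, lie_add, lie_sub, map_add, map_sub, hNN]
    abel
  refine ⟨?_, ?_, ?_, ?_, ?_, ?_⟩
  · intro x x' y; simp only [bN, add_lie, lie_add, map_add]; abel
  · intro x y y'; simp only [bN, add_lie, lie_add, map_add]; abel
  · intro t x y; simp only [bN, map_smul, smul_lie, lie_smul, smul_sub, smul_add]
  · intro t x y; simp only [bN, map_smul, smul_lie, lie_smul, smul_sub, smul_add]
  · intro x
    show ⁅N x, x⁆ + ⁅x, N x⁆ - N ⁅x, x⁆ = 0
    rw [lie_self, map_zero, ← lie_skew (N x) x]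
    abel
  · intro x y z
    rw [key, key, key]
    have j1 := lie_jacobi (N x) (N y) z
    have j2 := lie_jacobi (N y) (N z) x
    have j3 := lie_jacobi (N z) (N x) y
    have j4 := congrArg N (lie_jacobi (N x) y z)
    have j5 := congrArg N (lie_jacobi x (N y) z)
    have j6 := congrArg N (lie_jacobi x y (N z))
    have j7 := congrArg N (congrArg N (lie_jacobi x y z))
    simp only [map_add, map_zero] at j4 j5 j6 j7
    calc ⁅N x, ⁅N y, z⁆⁆ + ⁅N x, ⁅y, N z⁆⁆ + ⁅x, ⁅N y, N z⁆⁆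
      - (N ⁅N x, ⁅y, z⁆⁆ + N ⁅x, ⁅N y, z⁆⁆ + N ⁅x, ⁅y, N z⁆⁆)
      + N (N ⁅x, ⁅y, z⁆⁆)
      + (⁅N y, ⁅N z, x⁆⁆ + ⁅N y, ⁅z, N x⁆⁆ + ⁅y, ⁅N z, N x⁆⁆
      - (N ⁅N y, ⁅z, x⁆⁆ + N ⁅y, ⁅N z, x⁆⁆ + N ⁅y, ⁅z, N x⁆⁆)
      + N (N ⁅y, ⁅z, x⁆⁆))
      + (⁅N z, ⁅N x, y⁆⁆ + ⁅N z, ⁅x, N y⁆⁆ + ⁅z, ⁅N x, N y⁆⁆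
      - (N ⁅N z, ⁅x, y⁆⁆ + N ⁅z, ⁅N x, y⁆⁆ + N ⁅z, ⁅x, N y⁆⁆)
      + N (N ⁅z, ⁅x, y⁆⁆))
      = (⁅N x, ⁅N y, z⁆⁆ + ⁅N y, ⁅z, N x⁆⁆ + ⁅z, ⁅N x, N y⁆⁆)
        + (⁅N y, ⁅N z, x⁆⁆ + ⁅N z, ⁅x, N y⁆⁆ + ⁅x, ⁅N y, N z⁆⁆)
        + (⁅N z, ⁅N x, y⁆⁆ + ⁅N x, ⁅y, N z⁆⁆ + ⁅y, ⁅N z, N x⁆⁆)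
        - (N ⁅N x, ⁅y, z⁆⁆ + N ⁅y, ⁅z, N x⁆⁆ + N ⁅z, ⁅N x, y⁆⁆)
        - (N ⁅x, ⁅N y, z⁆⁆ + N ⁅N y, ⁅z, x⁆⁆ + N ⁅z, ⁅x, N y⁆⁆)
        - (N ⁅x, ⁅y, N z⁆⁆ + N ⁅y, ⁅N z, x⁆⁆ + N ⁅N z, ⁅x, y⁆⁆)
        + (N (N ⁅x, ⁅y, z⁆⁆) + N (N ⁅y, ⁅z, x⁆⁆) + N (N ⁅z, ⁅x, y⁆⁆)) := by abel
      _ = 0 := by rw [j1, j2, j3, j4, j5, j6, j7]; abel
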